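/- Let n ≥ 3 be an integer, α > 0 a real number, and d > 1. Set T = ln(d)/(2n). Then the function t ↦ (d e^{-2nt})^{α/2} (d e^{-2nt} - 1)^{(n-α)/2} is integrable on the interval (0, T) if and only if α < n+2. -/

import Mathlib

/-! With `s = T - t` one has `d e^{-2nt} = e^{2ns}`. On `(0, T)` the factor `e^{αns}` stays between
positive constants and `e^{2ns} - 1 ≍ s`, so the integrand is `≍ (T - t)^{(n - α)/2}`, which is
integrable near `T` exactly when `(n - α)/2 > -1`. -/

open Real MeasureTheory Asymptotics Filter Set

theorem Real.exp_sub_one_le_mul_exp (x : ℝ) : exp x - 1 ≤ x * exp x := by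
  have h := add_one_le_exp (-x)
  have : exp (-x) * exp x = 1 := by rw [← exp_add, neg_add_cancel, exp_zero]
  nlinarith [exp_pos x]

theorem Real.isTheta_exp_sub_one_Icc (b : ℝ) :
    (fun x => exp x - 1) =Θ[𝓟 (Icc 0 b)] fun x => x := by
  have hlow : ∀ x ∈ Icc 0 b, x ≤ exp x - 1 := fun x _ => by linarith [add_one_le_exp x]
  refine ⟨isBigO_principal.2 ⟨exp b, fun x hx => ?_⟩, isBigO_principal.2 ⟨1, fun x hx => ?_⟩⟩
  · rw [norm_of_nonneg (hx.1.trans (hlow x hx)), norm_of_nonneg hx.1]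
    calc exp x - 1 ≤ x * exp x := exp_sub_one_le_mul_exp x
      _ ≤ x * exp b := mul_le_mul_of_nonneg_left (exp_le_exp.2 hx.2) hx.1
      _ = exp b * x := mul_comm _ _
  · rw [norm_of_nonneg hx.1, norm_of_nonneg (hx.1.trans (hlow x hx)), one_mul]
    exact hlow x hx

theorem integrableOn_Ioo_sub_rpow_iff {T p : ℝ} (hT : 0 < T) :
    IntegrableOn (fun t : ℝ => (T - t) ^ p) (Ioo 0 T) ↔ -1 < p := by
  rw [← intervalIntegrable_iff_integrableOn_Ioo_of_le hT.le,
    ← intervalIntegral.integrableOn_Ioo_rpow_iff hT,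
    ← intervalIntegrable_iff_integrableOn_Ioo_of_le hT.le]
  constructor <;> intro h <;> simpa using (h.comp_sub_left T).symm

namespace Asymptotics

variable {X : Type*} [MeasurableSpace X] {μ : Measure X} {s : Set X} {f g : X → ℝ}

theorem IsBigO.integrableOn (hs : MeasurableSet s) (hfg : f =O[𝓟 s] g)
    (hf : AEStronglyMeasurable f (μ.restrict s)) (hg : IntegrableOn g s μ) :
    IntegrableOn f s μ := by
  obtain ⟨c, hc⟩ := isBigO_principal.1 hfg
  exact (hg.norm.const_mul c).mono' hf ((ae_restrict_iff' hs).2 (ae_of_all _ hc))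

theorem IsTheta.integrableOn_iff (hs : MeasurableSet s) (hfg : f =Θ[𝓟 s] g)
    (hf : AEStronglyMeasurable f (μ.restrict s)) (hg : AEStronglyMeasurable g (μ.restrict s)) :
    IntegrableOn f s μ ↔ IntegrableOn g s μ :=
  ⟨hfg.2.integrableOn hs hg, hfg.1.integrableOn hs hf⟩

end Asymptotics

theorem isTheta_exp_rpow_mul_exp_sub_one_rpow {k T : ℝ} (hk : 0 < k) (a p : ℝ) :
    (fun t => exp (k * (T - t)) ^ a * (exp (k * (T - t)) - 1) ^ p) =Θ[𝓟 (Ioo 0 T)]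
      fun t => (T - t) ^ p := by
  have hmaps : MapsTo (fun t => k * (T - t)) (Ioo 0 T) (Icc 0 (k * T)) := fun t ht =>
    ⟨by nlinarith [ht.2], by nlinarith [ht.1]⟩
  have hbase : (fun t => exp (k * (T - t)) - 1) =Θ[𝓟 (Ioo 0 T)] fun t => T - t := by
    have h := isTheta_exp_sub_one_Icc (k * T)
    have hcomp := (⟨h.1.comp_tendsto hmaps.tendsto, h.2.comp_tendsto hmaps.tendsto⟩ :
      (fun t => exp (k * (T - t)) - 1) =Θ[𝓟 (Ioo 0 T)] fun t => k * (T - t))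
    exact (isTheta_const_mul_right hk.ne').1 hcomp
  have hfactor : (fun t => exp (k * (T - t)) ^ a) =Θ[𝓟 (Ioo 0 T)] fun _ => (1 : ℝ) := by
    refine (ContinuousOn.isTheta_principal ?_ isCompact_Icc (by norm_num)
      fun t _ => (rpow_pos_of_pos (exp_pos _) a).ne').mono (principal_mono.2 Ioo_subset_Icc_self)
    exact (Continuous.rpow_const (by fun_prop) fun _ => Or.inl (exp_pos _).ne').continuousOn
  have hpow := hbase.rpow (r := p)
    (eventually_principal.2 fun t ht => sub_nonneg.2 (one_le_exp (by nlinarith [ht.2])))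
    (eventually_principal.2 fun t ht => sub_nonneg.2 ht.2.le)
  simpa using hfactor.mul hpow

theorem integrable_hyperbolic_ambient_iff_general (n : ℕ) (hn : 3 ≤ n) (α : ℝ)
    (d : ℝ) (hd : 1 < d) (T : ℝ) (hT : T = Real.log d / (2 * n)) :
    IntegrableOn
      (fun t : ℝ => (d * Real.exp (-(2 * n * t))) ^ (α / 2) *
        (d * Real.exp (-(2 * n * t)) - 1) ^ (((n : ℝ) - α) / 2))
      (Set.Ioo (0 : ℝ) T) ↔ α < n + 2 := by
  have hk : (0 : ℝ) < 2 * n := by positivity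
  have hT0 : 0 < T := hT ▸ div_pos (log_pos hd) hk
  have hd_exp : ∀ t, d * exp (-(2 * n * t)) = exp (2 * n * (T - t)) := fun t => by
    rw [mul_sub, exp_sub, hT, mul_div_cancel₀ _ hk.ne', exp_log (by linarith), exp_neg,
      div_eq_mul_inv]
  simp_rw [hd_exp]
  rw [(isTheta_exp_rpow_mul_exp_sub_one_rpow hk _ _).integrableOn_iff measurableSet_Ioo
      (by fun_prop) (Measurable.aestronglyMeasurable (by fun_prop)),
    integrableOn_Ioo_sub_rpow_iff hT0]
  constructor <;> intro h <;> linarith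

/-- Hyperbolic ambient example: for an integer `n ≥ 3`, a real `α > 0`, `d > 1` and
`T = ln d/(2n)`, the function `t ↦ (d e^{-2nt})^{α/2} (d e^{-2nt} - 1)^{(n-α)/2}` is
integrable on `(0, T)` if and only if `α < n + 2`. -/
theorem integrable_hyperbolic_ambient_iff (n : ℕ) (hn : 3 ≤ n) (α : ℝ) (hα : 0 < α)
    (d : ℝ) (hd : 1 < d) (T : ℝ) (hT : T = Real.log d / (2 * n)) :
    IntegrableOn
      (fun t : ℝ => (d * Real.exp (-(2 * n * t))) ^ (α / 2) *
        (d * Real.exp (-(2 * n * t)) - 1) ^ (((n : ℝ) - α) / 2))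
      (Set.Ioo (0 : ℝ) T) ↔ α < n + 2 :=
  integrable_hyperbolic_ambient_iff_general n hn α d hd T hT
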